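/- arXiv:2311.01303 — 3 statements merged into one kernel-verified Lean document; each statement's English description precedes it below -/
import Mathlib

section
/- Let (X, Y) be a random vector in ℝ^p × ℝ with joint Lebesgue density (u,v) ↦ f(u)·g(v|u), where f is the marginal density of X and g(·|u) the conditional density of Y given X = u. Assume there exist β, η ∈ (0,1] and c > 0 such that: |f(u) − f(u')| ≤ c·‖u−u'‖^β for all u, u'; |g(v|u) − g(v|u')| ≤ c·‖u−u'‖^β for all v, u, u'; |g(v|u) − g(v'|u)| ≤ c·|v−v'|^η for all u, v, v'; and f, g are uniformly bounded. Then there exists a constant C > 0 such that for all x ∈ ℝ^p, y ∈ ℝ and all b ∈ (0,1), | P(‖X − x‖ ≤ b, |Y − y| ≤ b) − 2·vol(B_p(0,1))·b^{1+p}·f(x)·g(y|x) | ≤ C·b^{1+p}·(b^η + b^β), where B_p(0,1) is the closed Euclidean unit ball of ℝ^p. In particular P(‖X−x‖ ≤ b, |Y−y| ≤ b) = b^{1+p}·(2·vol(B_p(0,1))·f(x)g(y|x) + φ_b^{x,y}) with sup_{x,y}|φ_b^{x,y}| = O(b^η + b^β). -/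
/-!
The ball `B(x,b) × B(y,b)` has volume `2 vol(B_p(0,1)) b^{1+p}`, and on it the density
`f(u) g(v|u)` differs from `f(x) g(y|x)` by at most a constant times `b^β + b^η`: split the
difference as `(f u - f x) g(v|u) + f x ((g(v|u) - g(v|x)) + (g(v|x) - g(y|x)))` and apply the
three Hölder bounds and the uniform bound `M`. Integrating this over the ball gives the expansion.
-/

open MeasureTheory Metric

lemma continuous_of_abs_sub_le {α : Type*} [TopologicalSpace α] {φ : α → ℝ}
    (ψ : α → α → ℝ) (hψ : ∀ q₀, Continuous (ψ q₀)) (hψ₀ : ∀ q₀, ψ q₀ q₀ = 0)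
    (h : ∀ q₀ q, |φ q - φ q₀| ≤ ψ q₀ q) : Continuous φ := by
  refine continuous_iff_continuousAt.2 fun q₀ => tendsto_iff_dist_tendsto_zero.2 ?_
  have hψt : Filter.Tendsto (ψ q₀) (nhds q₀) (nhds 0) := hψ₀ q₀ ▸ (hψ q₀).tendsto q₀
  exact squeeze_zero (fun _ => dist_nonneg) (fun q => (Real.dist_eq _ _).trans_le (h q₀ q)) hψt

lemma abs_setIntegral_sub_le {α : Type*} [MeasurableSpace α] {μ : Measure α} {s : Set α}
    (hs : μ s < ⊤) {φ : α → ℝ} (hφ : IntegrableOn φ s μ) {a K : ℝ}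
    (hK : ∀ q ∈ s, |φ q - a| ≤ K) :
    |∫ q in s, φ q ∂μ - μ.real s * a| ≤ K * μ.real s := by
  rw [← smul_eq_mul, ← setIntegral_const, ← integral_sub hφ (integrableOn_const hs.ne),
    ← Real.norm_eq_abs]
  exact norm_setIntegral_le_of_norm_le_const hs hK

lemma measureReal_preimage_eq_setIntegral {Ω α : Type*} [MeasurableSpace Ω] [MeasurableSpace α]
    {P : Measure Ω} {μ : Measure α} {Z : Ω → α} (hZ : Measurable Z) {ρ : α → ℝ}
    (hρ₀ : ∀ q, 0 ≤ ρ q) (hρ : AEStronglyMeasurable ρ μ)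
    (hlaw : P.map Z = μ.withDensity fun q => ENNReal.ofReal (ρ q))
    {s : Set α} (hs : MeasurableSet s) :
    P.real (Z ⁻¹' s) = ∫ q in s, ρ q ∂μ := by
  rw [integral_eq_lintegral_of_nonneg_ae (Filter.Eventually.of_forall hρ₀) hρ.restrict,
    ← withDensity_apply _ hs, ← hlaw, measureReal_def, Measure.map_apply hZ hs]

lemma measureReal_closedBall_prod_closedBall {E : Type*} [NormedAddCommGroup E]
    [NormedSpace ℝ E] [MeasurableSpace E] [BorelSpace E] [FiniteDimensional ℝ E]
    (μ : Measure E) [μ.IsAddHaarMeasure] (x : E) (y : ℝ) {b : ℝ} (hb : 0 ≤ b) :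
    (μ.prod volume).real (closedBall x b ×ˢ closedBall y b)
      = 2 * μ.real (closedBall 0 1) * b ^ (1 + Module.finrank ℝ E) := by
  rw [measureReal_prod_prod, Measure.addHaar_real_closedBall' μ x hb,
    Real.volume_real_closedBall hb, pow_add, pow_one]
  ring

section HolderDensity

variable {E : Type*} [SeminormedAddCommGroup E] {f : E → ℝ} {g : ℝ → E → ℝ} {β η c M : ℝ}

lemma abs_mul_sub_mul_le_of_holder (hf0 : ∀ u, 0 ≤ f u) (hg0 : ∀ v u, 0 ≤ g v u)
    (hHf : ∀ u u', |f u - f u'| ≤ c * ‖u - u'‖ ^ β)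
    (hHgx : ∀ v u u', |g v u - g v u'| ≤ c * ‖u - u'‖ ^ β)
    (hHgt : ∀ u v v', |g v u - g v' u| ≤ c * |v - v'| ^ η)
    (hfM : ∀ u, f u ≤ M) (hgM : ∀ v u, g v u ≤ M) (u x : E) (v y : ℝ) :
    |f u * g v u - f x * g y x| ≤ M * c * (2 * ‖u - x‖ ^ β + |v - y| ^ η) := by
  have hdecomp : f u * g v u - f x * g y x
      = (f u - f x) * g v u + f x * ((g v u - g v x) + (g v x - g y x)) := by ring
  have hM : 0 ≤ M := (hf0 x).trans (hfM x)
  have hcu : 0 ≤ c * ‖u - x‖ ^ β := (abs_nonneg _).trans (hHf u x)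
  have hcv : 0 ≤ c * |v - y| ^ η := (abs_nonneg _).trans (hHgt x v y)
  have hg : |g v u| ≤ M := by rw [abs_of_nonneg (hg0 v u)]; exact hgM v u
  have hf : |f x| ≤ M := by rw [abs_of_nonneg (hf0 x)]; exact hfM x
  calc |f u * g v u - f x * g y x|
      ≤ |(f u - f x) * g v u| + |f x * ((g v u - g v x) + (g v x - g y x))| :=
        hdecomp ▸ abs_add_le _ _
    _ ≤ |f u - f x| * |g v u| + |f x| * (|g v u - g v x| + |g v x - g y x|) := by
        rw [abs_mul, abs_mul]
        gcongr
        exact abs_add_le _ _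
    _ ≤ c * ‖u - x‖ ^ β * M + M * (c * ‖u - x‖ ^ β + c * |v - y| ^ η) := by
        gcongr
        exacts [hHf u x, hHgx v u x, hHgt x v y]
    _ = M * c * (2 * ‖u - x‖ ^ β + |v - y| ^ η) := by ring

lemma continuous_mul_of_holder (hβ : 0 < β) (hη : 0 < η)
    (hf0 : ∀ u, 0 ≤ f u) (hg0 : ∀ v u, 0 ≤ g v u)
    (hHf : ∀ u u', |f u - f u'| ≤ c * ‖u - u'‖ ^ β)
    (hHgx : ∀ v u u', |g v u - g v u'| ≤ c * ‖u - u'‖ ^ β)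
    (hHgt : ∀ u v v', |g v u - g v' u| ≤ c * |v - v'| ^ η)
    (hfM : ∀ u, f u ≤ M) (hgM : ∀ v u, g v u ≤ M) :
    Continuous fun q : E × ℝ => f q.1 * g q.2 q.1 := by
  have hβ₀ := hβ.le
  have hη₀ := hη.le
  exact continuous_of_abs_sub_le (fun q₀ q => M * c * (2 * ‖q.1 - q₀.1‖ ^ β + |q.2 - q₀.2| ^ η))
    (fun _ => by fun_prop (disch := assumption))
    (fun _ => by simp [Real.zero_rpow hβ.ne', Real.zero_rpow hη.ne'])
    (fun q₀ q => abs_mul_sub_mul_le_of_holder hf0 hg0 hHf hHgx hHgt hfM hgM q.1 q₀.1 q.2 q₀.2)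

lemma abs_mul_sub_mul_le_of_mem_closedBall (hβ : 0 ≤ β) (hη : 0 ≤ η) (hc : 0 ≤ c)
    (hf0 : ∀ u, 0 ≤ f u) (hg0 : ∀ v u, 0 ≤ g v u)
    (hHf : ∀ u u', |f u - f u'| ≤ c * ‖u - u'‖ ^ β)
    (hHgx : ∀ v u u', |g v u - g v u'| ≤ c * ‖u - u'‖ ^ β)
    (hHgt : ∀ u v v', |g v u - g v' u| ≤ c * |v - v'| ^ η)
    (hfM : ∀ u, f u ≤ M) (hgM : ∀ v u, g v u ≤ M)
    {x u : E} {y v b : ℝ} (hu : u ∈ closedBall x b) (hv : v ∈ closedBall y b) :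
    |f u * g v u - f x * g y x| ≤ 2 * M * c * (b ^ η + b ^ β) := by
  rw [mem_closedBall_iff_norm] at hu hv
  rw [Real.norm_eq_abs] at hv
  have hM : 0 ≤ M := (hf0 x).trans (hfM x)
  have hb : 0 ≤ b := (norm_nonneg _).trans hu
  calc |f u * g v u - f x * g y x| ≤ M * c * (2 * ‖u - x‖ ^ β + |v - y| ^ η) :=
        abs_mul_sub_mul_le_of_holder hf0 hg0 hHf hHgx hHgt hfM hgM u x v y
    _ ≤ M * c * (2 * b ^ β + b ^ η) := by gcongr
    _ ≤ 2 * M * c * (b ^ η + b ^ β) := by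
        nlinarith [mul_nonneg (mul_nonneg hM hc) (Real.rpow_nonneg hb η)]

end HolderDensity

/-- Bivariate small-ball expansion for a Hölder joint density `f(u)·g(v|u)` on
`ℝ^p × ℝ`: there is a constant `C > 0` such that for all `x, y` and `b ∈ (0,1)`,
`|P(‖X−x‖ ≤ b, |Y−y| ≤ b) − 2·vol(B_p(0,1))·b^{1+p}·f(x)·g(y|x)|
  ≤ C·b^{1+p}·(b^η + b^β)`. -/
theorem smallball_joint_density_expansion (p : ℕ)
    {Ω : Type*} [MeasurableSpace Ω] (P : Measure Ω) [IsProbabilityMeasure P]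
    (X : Ω → EuclideanSpace ℝ (Fin p)) (Y : Ω → ℝ)
    (hX : Measurable X) (hY : Measurable Y)
    (f : EuclideanSpace ℝ (Fin p) → ℝ) (g : ℝ → EuclideanSpace ℝ (Fin p) → ℝ)
    (hf0 : ∀ u, 0 ≤ f u) (hg0 : ∀ v u, 0 ≤ g v u)
    (hlaw : Measure.map (fun ω => (X ω, Y ω)) P
      = volume.withDensity fun q => ENNReal.ofReal (f q.1 * g q.2 q.1))
    (β η c : ℝ) (hβ : β ∈ Set.Ioc (0 : ℝ) 1) (hη : η ∈ Set.Ioc (0 : ℝ) 1) (hc : 0 < c)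
    (hHf : ∀ u u', |f u - f u'| ≤ c * ‖u - u'‖ ^ β)
    (hHgx : ∀ v u u', |g v u - g v u'| ≤ c * ‖u - u'‖ ^ β)
    (hHgt : ∀ u v v', |g v u - g v' u| ≤ c * |v - v'| ^ η)
    (M : ℝ) (hfM : ∀ u, f u ≤ M) (hgM : ∀ v u, g v u ≤ M) :
    ∃ C > 0, ∀ (x : EuclideanSpace ℝ (Fin p)) (y b : ℝ), b ∈ Set.Ioo (0 : ℝ) 1 →
      |(P {ω | ‖X ω - x‖ ≤ b ∧ |Y ω - y| ≤ b}).toReal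
          - 2 * (volume (closedBall (0 : EuclideanSpace ℝ (Fin p)) 1)).toReal
              * b ^ (1 + p) * f x * g y x|
        ≤ C * b ^ (1 + p) * (b ^ η + b ^ β) := by
  have hcont := continuous_mul_of_holder hβ.1 hη.1 hf0 hg0 hHf hHgx hHgt hfM hgM
  have hM : 0 ≤ M := (hf0 0).trans (hfM 0)
  set vol₁ := volume.real (closedBall (0 : EuclideanSpace ℝ (Fin p)) 1)
  have hvol₁ : 0 < vol₁ := ENNReal.toReal_pos (measure_closedBall_pos _ _ one_pos).ne'
    measure_closedBall_lt_top.ne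
  refine ⟨2 * vol₁ * (2 * (M + 1) * c), by positivity, fun x y b ⟨hb, _⟩ => ?_⟩
  set S := closedBall x b ×ˢ closedBall y b
  have hSc : IsCompact S := (isCompact_closedBall x b).prod (isCompact_closedBall y b)
  have hevent : {ω | ‖X ω - x‖ ≤ b ∧ |Y ω - y| ≤ b} = (fun ω => (X ω, Y ω)) ⁻¹' S := by
    ext ω
    simp [S, dist_eq_norm]
  have hclose : ∀ q ∈ S, |f q.1 * g q.2 q.1 - f x * g y x|
      ≤ 2 * (M + 1) * c * (b ^ η + b ^ β) := fun q hq =>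
    (abs_mul_sub_mul_le_of_mem_closedBall hβ.1.le hη.1.le hc.le hf0 hg0 hHf hHgx hHgt hfM hgM
      hq.1 hq.2).trans (by gcongr; linarith)
  have hK := abs_setIntegral_sub_le (hSc.measure_lt_top (μ := volume))
    (hcont.continuousOn.integrableOn_compact hSc) hclose
  rw [← measureReal_preimage_eq_setIntegral (hX.prodMk hY)
      (fun q => mul_nonneg (hf0 q.1) (hg0 q.2 q.1)) hcont.aestronglyMeasurable hlaw
      hSc.isClosed.measurableSet, ← hevent, Measure.volume_eq_prod,
    measureReal_closedBall_prod_closedBall volume x y hb.le, finrank_euclideanSpace_fin] at hK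
  calc _ = |P.real {ω | ‖X ω - x‖ ≤ b ∧ |Y ω - y| ≤ b}
          - 2 * vol₁ * b ^ (1 + p) * (f x * g y x)| := by rw [mul_assoc _ (f x)]; rfl
    _ ≤ _ := hK
    _ = _ := by ring
end

section
/- Let K : ℝ^p → ℝ be a nonnegative bounded kernel supported in the closed Euclidean unit ball, K_h(u) := h^{-p}K(u/h). Let f : ℝ^p → [0,∞) be a probability density and H : ℝ × ℝ^p → [0,1] a measurable function. Assume there exist β ∈ (0,1] and c > 0 such that |f(x) − f(y)| ≤ c‖x−y‖^β and |H(t|x) − H(t|y)| ≤ c‖x−y‖^β for all t and all x,y. Then for every x ∈ ℝ^p, t ∈ ℝ and h ∈ (0,1), | ∫_{ℝ^p} K_h(x−y)·H(t|y)·f(y) dy − H(t|x)·∫_{ℝ^p} K_h(x−y)·f(y) dy | ≤ h^β · C_{K,X,β}, where C_{K,X,β} := h^β·c²·∫_{ℝ^p} K(y)‖y‖^{2β} dy + c·f(x)·∫_{ℝ^p} K(y)‖y‖^β dy. In probabilistic terms, |E[K_h(x−X)·1_{Y ≤ t}] − H(t|x)·E[K_h(x−X)]| ≤ h^β·C_{K,X,β}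 when X has density f and H(t|·) is the conditional distribution function of Y given X. -/
/-!
Subtracting the two integrals, the bias is `∫ K_h(x - u) (H(t|u) - H(t|x)) f(u) du`. The Hölder
bounds give `|H(t|u) - H(t|x)| f(u) ≤ c‖x - u‖^β (f(x) + c‖x - u‖^β)`, and the substitution
`u = x - h v` turns `∫ K_h(x - u) ‖x - u‖^γ du` into `h^γ ∫ K(v) ‖v‖^γ dv`. Hölder continuity also
makes `f` and `H(t|·)` continuous, so against the bounded, compactly supported kernel every
integrand involved is integrable.
-/

open MeasureTheory Metric Module Function Filter Topology

theorem continuous_of_abs_sub_le_mul_rpow {X : Type*} [SeminormedAddCommGroup X] {g : X → ℝ}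
    {c β : ℝ} (hβ : 0 < β) (hg : ∀ u v, |g u - g v| ≤ c * ‖u - v‖ ^ β) : Continuous g := by
  refine continuous_iff_continuousAt.2 fun x => tendsto_iff_dist_tendsto_zero.2 ?_
  have hlim : Tendsto (fun u => c * ‖u - x‖ ^ β) (𝓝 x) (𝓝 0) := by
    have := (((continuous_id.sub (continuous_const (y := x))).norm.rpow_const
      fun _ => Or.inr hβ.le).const_mul c).tendsto x
    simpa [Real.zero_rpow hβ.ne'] using this
  exact squeeze_zero (fun _ => dist_nonneg) (fun u => hg u x) hlim

theorem abs_mul_sub_mul_le {k a a₀ b b₀ c r : ℝ} (hk : 0 ≤ k) (hb : 0 ≤ b)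
    (ha : |a - a₀| ≤ c * r) (hb₀ : |b - b₀| ≤ c * r) :
    |k * ((a - a₀) * b)| ≤ c * b₀ * (k * r) + c ^ 2 * (k * r ^ 2) := by
  rw [abs_mul, abs_of_nonneg hk, abs_mul, abs_of_nonneg hb]
  calc k * (|a - a₀| * b)
      ≤ k * (c * r * (b₀ + c * r)) := mul_le_mul_of_nonneg_left
        (mul_le_mul ha (by linarith [le_abs_self (b - b₀)]) hb ((abs_nonneg _).trans ha)) hk
    _ = _ := by ring

section ScaledKernel

variable {E : Type*} [NormedAddCommGroup E] [NormedSpace ℝ E] {K : E → ℝ} {h : ℝ}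

variable (K h) in
noncomputable def scaledKernel (u : E) : ℝ := (h ^ finrank ℝ E)⁻¹ * K (h⁻¹ • u)

theorem scaledKernel_nonneg (hK : ∀ u, 0 ≤ K u) (hh : 0 ≤ h) (u : E) :
    0 ≤ scaledKernel K h u :=
  mul_nonneg (inv_nonneg.2 (pow_nonneg hh _)) (hK _)

theorem support_scaledKernel_subset (hK : support K ⊆ closedBall 0 1) (hh : 0 < h) :
    support (scaledKernel K h) ⊆ closedBall 0 h := by
  intro u hu
  have hu' : h⁻¹ • u ∈ closedBall (0 : E) 1 := hK (right_ne_zero_of_mul hu)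
  rw [mem_closedBall_zero_iff, norm_smul, Real.norm_of_nonneg (inv_nonneg.2 hh.le),
    inv_mul_le_iff₀ hh, mul_one] at hu'
  exact mem_closedBall_zero_iff.2 hu'

variable [FiniteDimensional ℝ E] [MeasurableSpace E] [BorelSpace E] {μ : Measure E}
  [μ.IsAddHaarMeasure]

theorem integral_scaledKernel_mul_norm_rpow (hh : 0 < h) (γ : ℝ) :
    ∫ u, scaledKernel K h u * ‖u‖ ^ γ ∂μ = h ^ γ * ∫ v, K v * ‖v‖ ^ γ ∂μ := by
  have hrescale : ∀ u : E, scaledKernel K h u * ‖u‖ ^ γ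
      = (h ^ finrank ℝ E)⁻¹ * h ^ γ * (K (h⁻¹ • u) * ‖h⁻¹ • u‖ ^ γ) := by
    intro u
    rw [norm_smul, Real.norm_of_nonneg (inv_nonneg.2 hh.le),
      Real.mul_rpow (inv_nonneg.2 hh.le) (norm_nonneg _), Real.inv_rpow hh.le, scaledKernel]
    field_simp
  simp_rw [hrescale]
  rw [integral_const_mul, Measure.integral_comp_inv_smul_of_nonneg μ (fun v => K v * ‖v‖ ^ γ)
    hh.le, smul_eq_mul]
  field_simp

theorem integrable_scaledKernel_sub_mul (hKm : Measurable K) {CK : ℝ} (hKb : ∀ u, K u ≤ CK)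
    (hK0 : ∀ u, 0 ≤ K u) (hK : support K ⊆ closedBall 0 1) (hh : 0 < h) (x : E) {g : E → ℝ}
    (hg : Continuous g) : Integrable (fun u => scaledKernel K h (x - u) * g u) μ := by
  have hsupp : support (fun u => scaledKernel K h (x - u)) ⊆ closedBall x h := fun u hu => by
    rw [mem_closedBall, dist_eq_norm', ← mem_closedBall_zero_iff]
    exact support_scaledKernel_subset hK hh hu
  have hKh : IntegrableOn (fun u => scaledKernel K h (x - u)) (closedBall x h) μ := by
    refine Measure.integrableOn_of_bounded (M := (h ^ finrank ℝ E)⁻¹ * CK)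
      measure_closedBall_lt_top.ne ?_ (ae_of_all _ fun u => ?_)
    · exact (measurable_const.mul (hKm.comp ((measurable_const.sub measurable_id).const_smul
        h⁻¹))).aestronglyMeasurable
    · rw [Real.norm_of_nonneg (scaledKernel_nonneg hK0 hh.le _)]
      exact mul_le_mul_of_nonneg_left (hKb _) (inv_nonneg.2 (pow_nonneg hh.le _))
  exact (integrableOn_iff_integrable_of_support_subset
    ((support_mul_subset_left _ _).trans hsupp)).1
    (hKh.mul_continuousOn hg.continuousOn (isCompact_closedBall x h))

theorem integral_scaledKernel_sub_mul_norm_rpow (hh : 0 < h) (x : E) (γ : ℝ) :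
    ∫ u, scaledKernel K h (x - u) * ‖x - u‖ ^ γ ∂μ = h ^ γ * ∫ v, K v * ‖v‖ ^ γ ∂μ := by
  rw [integral_sub_left_eq_self (fun w => scaledKernel K h w * ‖w‖ ^ γ) μ x,
    integral_scaledKernel_mul_norm_rpow hh]

theorem abs_integral_scaledKernel_mul_sub_le (hKm : Measurable K) {CK : ℝ}
    (hKb : ∀ u, K u ≤ CK) (hK0 : ∀ u, 0 ≤ K u) (hK : support K ⊆ closedBall 0 1) (hh : 0 < h)
    {F G : E → ℝ} (hG0 : ∀ u, 0 ≤ G u) {β c : ℝ} (hβ : 0 < β)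
    (hF : ∀ u v, |F u - F v| ≤ c * ‖u - v‖ ^ β) (hG : ∀ u v, |G u - G v| ≤ c * ‖u - v‖ ^ β)
    (x : E) :
    |(∫ u, scaledKernel K h (x - u) * F u * G u ∂μ)
        - F x * ∫ u, scaledKernel K h (x - u) * G u ∂μ|
      ≤ h ^ β * (h ^ β * c ^ 2 * (∫ u, K u * ‖u‖ ^ (2 * β) ∂μ)
          + c * G x * ∫ u, K u * ‖u‖ ^ β ∂μ) := by
  have hFc := continuous_of_abs_sub_le_mul_rpow hβ hF
  have hGc := continuous_of_abs_sub_le_mul_rpow hβ hG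
  have hint {g : E → ℝ} (hg : Continuous g) :=
    integrable_scaledKernel_sub_mul (μ := μ) hKm hKb hK0 hK hh x hg
  have hnorm (γ : ℝ) (hγ : 0 ≤ γ) : Continuous fun u => ‖x - u‖ ^ γ :=
    (continuous_const.sub continuous_id).norm.rpow_const fun _ => Or.inr hγ
  set k := fun u => scaledKernel K h (x - u)
  have hdiff : (∫ u, k u * F u * G u ∂μ) - F x * ∫ u, k u * G u ∂μ
      = ∫ u, k u * ((F u - F x) * G u) ∂μ := by
    have hFG := hint (g := fun u => F u * G u) (hFc.mul hGc)
    rw [← integral_const_mul, ← integral_sub (by simpa only [mul_assoc] using hFG)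
      ((hint hGc).const_mul _)]
    congr 1 with u
    ring
  have hpoint (u : E) : |k u * ((F u - F x) * G u)|
      ≤ c * G x * (k u * ‖x - u‖ ^ β) + c ^ 2 * (k u * ‖x - u‖ ^ (2 * β)) := by
    rw [mul_comm 2 β, Real.rpow_mul (norm_nonneg _), Real.rpow_two]
    exact abs_mul_sub_mul_le (scaledKernel_nonneg hK0 hh.le _) (hG0 u)
      (norm_sub_rev x u ▸ hF u x) (norm_sub_rev x u ▸ hG u x)
  calc |(∫ u, k u * F u * G u ∂μ) - F x * ∫ u, k u * G u ∂μ|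
      ≤ ∫ u, |k u * ((F u - F x) * G u)| ∂μ := hdiff ▸ abs_integral_le_integral_abs
    _ ≤ ∫ u, c * G x * (k u * ‖x - u‖ ^ β) + c ^ 2 * (k u * ‖x - u‖ ^ (2 * β)) ∂μ :=
        integral_mono (hint ((hFc.sub continuous_const).mul hGc)).abs
          (((hint (hnorm β hβ.le)).const_mul _).add ((hint (hnorm _ (by positivity))).const_mul _))
          hpoint
    _ = _ := by
      rw [integral_add ((hint (hnorm β hβ.le)).const_mul _)
          ((hint (hnorm _ (by positivity))).const_mul _), integral_const_mul, integral_const_mul,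
        integral_scaledKernel_sub_mul_norm_rpow hh, integral_scaledKernel_sub_mul_norm_rpow hh,
        mul_comm 2 β, Real.rpow_mul hh.le, Real.rpow_two]
      ring

end ScaledKernel

theorem kernel_bias_bound_general (p : ℕ)
    (K : EuclideanSpace ℝ (Fin p) → ℝ) (hK0 : ∀ u, 0 ≤ K u) (hKm : Measurable K)
    (CK : ℝ) (hKb : ∀ u, K u ≤ CK)
    (hKsupp : ∀ u, u ∉ closedBall (0 : EuclideanSpace ℝ (Fin p)) 1 → K u = 0)
    (f : EuclideanSpace ℝ (Fin p) → ℝ) (hf0 : ∀ u, 0 ≤ f u)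
    (H : ℝ → EuclideanSpace ℝ (Fin p) → ℝ)
    (β c : ℝ) (hβ : β ∈ Set.Ioc (0 : ℝ) 1)
    (hHolderf : ∀ u v, |f u - f v| ≤ c * ‖u - v‖ ^ β)
    (hHolderH : ∀ t u v, |H t u - H t v| ≤ c * ‖u - v‖ ^ β)
    (x : EuclideanSpace ℝ (Fin p)) (t : ℝ) (h : ℝ) (hh : h ∈ Set.Ioo (0 : ℝ) 1) :
    |(∫ u, (h ^ p)⁻¹ * K (h⁻¹ • (x - u)) * H t u * f u)
        - H t x * ∫ u, (h ^ p)⁻¹ * K (h⁻¹ • (x - u)) * f u|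
      ≤ h ^ β * (h ^ β * c ^ 2 * (∫ u, K u * ‖u‖ ^ (2 * β))
          + c * f x * ∫ u, K u * ‖u‖ ^ β) := by
  have hK : support K ⊆ closedBall 0 1 := fun u hu => not_not.1 (mt (hKsupp u) hu)
  have hscaled (u : EuclideanSpace ℝ (Fin p)) :
      (h ^ p)⁻¹ * K (h⁻¹ • (x - u)) = scaledKernel K h (x - u) := by
    rw [scaledKernel, finrank_euclideanSpace_fin]
  simp_rw [hscaled]
  exact abs_integral_scaledKernel_mul_sub_le hKm hKb hK0 hK hh.1 hf0 hβ.1 (hHolderH t) hHolderf x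

/-- Kernel bias bound (Lemma on `E[K_h(x−X)·1_{Y≤t}]`): under Hölder regularity
of the density `f` and of the conditional distribution function `H(t|·)`,
`|∫ K_h(x−y)H(t|y)f(y)dy − H(t|x)·∫ K_h(x−y)f(y)dy| ≤ h^β·C_{K,X,β}` where
`C_{K,X,β} = h^β·c²·∫K(y)‖y‖^{2β}dy + c·f(x)·∫K(y)‖y‖^β dy`. -/
theorem kernel_bias_bound (p : ℕ)
    (K : EuclideanSpace ℝ (Fin p) → ℝ) (hK0 : ∀ u, 0 ≤ K u) (hKm : Measurable K)
    (CK : ℝ) (hKb : ∀ u, K u ≤ CK)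
    (hKsupp : ∀ u, u ∉ closedBall (0 : EuclideanSpace ℝ (Fin p)) 1 → K u = 0)
    (f : EuclideanSpace ℝ (Fin p) → ℝ) (hf0 : ∀ u, 0 ≤ f u) (hfm : Measurable f)
    (hfint : ∫ u, f u = 1)
    (H : ℝ → EuclideanSpace ℝ (Fin p) → ℝ)
    (hHm : Measurable fun q : ℝ × EuclideanSpace ℝ (Fin p) => H q.1 q.2)
    (hH01 : ∀ t u, H t u ∈ Set.Icc (0 : ℝ) 1)
    (β c : ℝ) (hβ : β ∈ Set.Ioc (0 : ℝ) 1) (hc : 0 < c)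
    (hHolderf : ∀ u v, |f u - f v| ≤ c * ‖u - v‖ ^ β)
    (hHolderH : ∀ t u v, |H t u - H t v| ≤ c * ‖u - v‖ ^ β)
    (x : EuclideanSpace ℝ (Fin p)) (t : ℝ) (h : ℝ) (hh : h ∈ Set.Ioo (0 : ℝ) 1) :
    |(∫ u, (h ^ p)⁻¹ * K (h⁻¹ • (x - u)) * H t u * f u)
        - H t x * ∫ u, (h ^ p)⁻¹ * K (h⁻¹ • (x - u)) * f u|
      ≤ h ^ β * (h ^ β * c ^ 2 * (∫ u, K u * ‖u‖ ^ (2 * β))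
          + c * f x * ∫ u, K u * ‖u‖ ^ β) :=
  kernel_bias_bound_general p K hK0 hKm CK hKb hKsupp f hf0 H β c hβ hHolderf hHolderH x t h hh
end

section
/- Let α ≥ 0 and let q_0, q_1 > 0 be real numbers satisfying q_0/q_1 ≤ e^α and q_1/q_0 ≤ e^α. Let h_0, h_1 ∈ ℝ with h_0 + h_1 = 0. Then | q_0·h_0 + q_1·h_1 | ≤ (e^α − 1) · min(q_0, q_1) · |h_0|. -/
theorem abs_sub_le_sub_one_mul_min {R : Type*} [CommRing R] [LinearOrder R]
    [IsStrictOrderedRing R] {a b c : R} (hab : a ≤ c * b) (hba : b ≤ c * a) :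
    |a - b| ≤ (c - 1) * min a b := by
  rcases le_total a b with h | h
  · rw [min_eq_left h, abs_sub_comm, abs_of_nonneg (sub_nonneg.2 h)]
    linarith
  · rw [min_eq_right h, abs_of_nonneg (sub_nonneg.2 h)]
    linarith

theorem channel_difference_pointwise_bound_general (α : ℝ)
    (q0 q1 : ℝ) (hq0 : 0 < q0) (hq1 : 0 < q1)
    (h01 : q0 / q1 ≤ Real.exp α) (h10 : q1 / q0 ≤ Real.exp α)
    (h0 h1 : ℝ) (hsum : h0 + h1 = 0) :
    |q0 * h0 + q1 * h1| ≤ (Real.exp α - 1) * min q0 q1 * |h0| := by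
  have h1_eq : h1 = -h0 := eq_neg_of_add_eq_zero_right hsum
  calc |q0 * h0 + q1 * h1| = |q0 - q1| * |h0| := by
        rw [h1_eq, ← abs_mul]
        congr 1
        ring
    _ ≤ (Real.exp α - 1) * min q0 q1 * |h0| := by
        gcongr
        exact abs_sub_le_sub_one_mul_min ((div_le_iff₀ hq1).1 h01) ((div_le_iff₀ hq0).1 h10)

/-- Key pointwise bound in the minimax lower-bound proof: if `q₀, q₁ > 0` are
channel density values with ratios bounded by `e^α`, and `h₀ + h₁ = 0`, then
`|q₀·h₀ + q₁·h₁| ≤ (e^α − 1)·min(q₀,q₁)·|h₀|`. -/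
theorem channel_difference_pointwise_bound (α : ℝ) (hα : 0 ≤ α)
    (q0 q1 : ℝ) (hq0 : 0 < q0) (hq1 : 0 < q1)
    (h01 : q0 / q1 ≤ Real.exp α) (h10 : q1 / q0 ≤ Real.exp α)
    (h0 h1 : ℝ) (hsum : h0 + h1 = 0) :
    |q0 * h0 + q1 * h1| ≤ (Real.exp α - 1) * min q0 q1 * |h0| :=
  channel_difference_pointwise_bound_general α q0 q1 hq0 hq1 h01 h10 h0 h1 hsum
end
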